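/- Let Γ be a semicomplete multipartite commutative weakly distance-regular digraph and let T={q : (1,q−1)∈∂̃(Γ)}. If q∈T, then q≤4; equivalently, every arc (x,y) of Γ satisfies ∂(y,x)≤3. -/
import Mathlib


open Set Matrix

namespace Paper

variable {V : Type*} {W : Type*}

/-- There is a directed walk of length `n` from `x` to `y` in the digraph with arc relation `A`. -/
def HasPathOfLength (A : V → V → Prop) (x y : V) (n : ℕ) : Prop :=
  ∃ p : ℕ → V, p 0 = x ∧ p n = y ∧ ∀ i < n, A (p i) (p (i + 1))

/-- A digraph is strongly connected if there is a directed path between any two vertices. -/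
def IsStronglyConnected (A : V → V → Prop) : Prop :=
  ∀ x y, ∃ n, HasPathOfLength A x y n

/-- The distance `∂(x,y)`: the length of a shortest directed path from `x` to `y`. -/
noncomputable def ddist (A : V → V → Prop) (x y : V) : ℕ :=
  sInf {n | HasPathOfLength A x y n}

/-- The two-way distance `∂̃(x,y) = (∂(x,y), ∂(y,x))`. -/
noncomputable def tdist (A : V → V → Prop) (x y : V) : ℕ × ℕ :=
  (ddist A x y, ddist A y x)

/-- The two-way distance set `∂̃(Γ)`. -/
def tdistSet (A : V → V → Prop) : Set (ℕ × ℕ) :=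
  {d | ∃ x y, tdist A x y = d}

/-- The number `p_{ĩ,j̃}(x,y) = |{z : ∂̃(x,z) = ĩ, ∂̃(z,y) = j̃}|`. -/
noncomputable def pnum (A : V → V → Prop) (i j : ℕ × ℕ) (x y : V) : ℕ :=
  {z | tdist A x z = i ∧ tdist A z y = j}.ncard

/-- A weakly distance-regular digraph. -/
def IsWDRD (A : V → V → Prop) : Prop :=
  IsStronglyConnected A ∧
  (∃ d ∈ tdistSet A, d.1 ≠ d.2) ∧
  ∀ i j : ℕ × ℕ, ∀ x y x' y' : V,
    tdist A x y = tdist A x' y' → pnum A i j x y = pnum A i j x' y'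

/-- Commutativity of the attached scheme: `p_{ĩ,j̃}^{h̃} = p_{j̃,ĩ}^{h̃}`. -/
def IsCommutativeDigraph (A : V → V → Prop) : Prop :=
  ∀ i j : ℕ × ℕ, ∀ x y : V, pnum A i j x y = pnum A j i x y

/-- A commutative weakly distance-regular digraph. -/
def IsCWDRD (A : V → V → Prop) : Prop :=
  IsWDRD A ∧ IsCommutativeDigraph A

/-- `A` is semicomplete multipartite with partition given by `f` (parts are the fibres). -/
def IsSemicompleteMultipartiteWith (A : V → V → Prop) {m : ℕ} (f : V → Fin m) : Prop :=
  (∀ x, ¬ A x x) ∧ (∀ i, 2 ≤ {x | f x = i}.ncard) ∧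
  ∀ x y : V, x ≠ y → ((A x y ∨ A y x) ↔ f x ≠ f y)

/-- A semicomplete multipartite digraph: the vertex set is partitioned into `m ≥ 2` partite
sets, each of size at least `2`, and two distinct vertices are joined by an arc in at least
one direction iff they lie in different partite sets. -/
def IsSemicompleteMultipartite (A : V → V → Prop) : Prop :=
  ∃ m : ℕ, 2 ≤ m ∧ ∃ f : V → Fin m, IsSemicompleteMultipartiteWith A f

/-- A semicomplete digraph: any two distinct vertices are joined by an arc in
at least one direction. -/
def IsSemicomplete (A : V → V → Prop) : Prop :=
  (∀ x, ¬ A x x) ∧ ∀ x y : V, x ≠ y → A x y ∨ A y x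

/-- A circuit of length `n`: a sequence `w₀,…,w_{n-1}` with consecutive arcs and an arc
from `w_{n-1}` back to `w₀`. -/
def HasCircuitOfLength (A : V → V → Prop) (n : ℕ) : Prop :=
  ∃ p : ℕ → V, p n = p 0 ∧ ∀ i < n, A (p i) (p (i + 1))

/-- The girth: the length of a shortest circuit. -/
noncomputable def girth (A : V → V → Prop) : ℕ :=
  sInf {n | 1 ≤ n ∧ HasCircuitOfLength A n}

/-- Lexicographic product of digraphs. -/
def lexProd (A : V → V → Prop) (B : W → W → Prop) : V × W → V × W → Prop :=
  fun u v => A u.1 v.1 ∨ (u.1 = v.1 ∧ B u.2 v.2)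

/-- The `n`-coclique extension of a digraph: `A ∘ K̄ₙ`. -/
def cocliqueExt (A : V → V → Prop) (n : ℕ) : V × Fin n → V × Fin n → Prop :=
  lexProd A (fun _ _ : Fin n => False)

/-- Isomorphism of digraphs. -/
def Iso (A : V → V → Prop) (B : W → W → Prop) : Prop :=
  ∃ e : V ≃ W, ∀ x y : V, A x y ↔ B (e x) (e y)

/-- An `(m,r)`-team semicomplete multipartite digraph with partite sets the fibres of `f`:
`m ≥ 2` parts, each of size `r ≥ 2`. -/
def IsTeamSMD (A : V → V → Prop) {m : ℕ} (f : V → Fin m) (r : ℕ) : Prop :=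
  2 ≤ m ∧ 2 ≤ r ∧ (∀ x, ¬ A x x) ∧ (∀ i : Fin m, {x | f x = i}.ncard = r) ∧
  ∀ x y : V, x ≠ y → ((A x y ∨ A y x) ↔ f x ≠ f y)

/-- Regular of valency `k`: every vertex has exactly `k` out-neighbours and `k`
in-neighbours. -/
def IsRegularOfValency (A : V → V → Prop) (k : ℕ) : Prop :=
  ∀ x : V, {y | A x y}.ncard = k ∧ {y | A y x}.ncard = k

open Classical in
/-- Adjacency matrix of the symmetric part `EΓ`. -/
noncomputable def matE (A : V → V → Prop) : Matrix V V ℤ :=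
  Matrix.of fun x y => if A x y ∧ A y x then 1 else 0

open Classical in
/-- Adjacency matrix of the asymmetric part `A⃗Γ`. -/
noncomputable def matAr (A : V → V → Prop) : Matrix V V ℤ :=
  Matrix.of fun x y => if A x y ∧ ¬ A y x then 1 else 0

open Classical in
/-- Adjacency matrix of a digraph. -/
noncomputable def matAdj (A : V → V → Prop) : Matrix V V ℤ :=
  Matrix.of fun x y => if A x y then 1 else 0

/-- The all-ones matrix `J`. -/
def matJ (V : Type*) : Matrix V V ℤ := Matrix.of fun _ _ => 1

open Classical in
/-- The matrix equations in the definition of a doubly regular team semicomplete multipartite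
digraph, with constants `t, αᵢ, βᵢ, γᵢ, ηᵢ` (`A₀ = matE A`, `A₁ = matAr A`). -/
def DRConstEq [Fintype V] (A : V → V → Prop) (t : ℤ) (α β γ η : ℕ → ℤ) : Prop :=
  ∀ i j : Fin 2,
    ![matE A, matAr A] i * ![matE A, matAr A] j =
      (if (i : ℕ) + (j : ℕ) = 0 then t else 0) • (1 : Matrix V V ℤ) +
      α ((i : ℕ) + (j : ℕ)) • matAr A +
      β ((i : ℕ) + (j : ℕ)) • (matAr A)ᵀ +
      γ ((i : ℕ) + (j : ℕ)) • matE A +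
      η ((i : ℕ) + (j : ℕ)) • (matJ V - 1 - matAr A - (matAr A)ᵀ - matE A)

/-- A doubly regular `(m,r)`-team semicomplete multipartite digraph. -/
def IsDoublyRegularTeamSMD [Fintype V] (A : V → V → Prop) {m : ℕ} (f : V → Fin m)
    (r : ℕ) : Prop :=
  IsTeamSMD A f r ∧ (∃ k, IsRegularOfValency A k) ∧
  ∃ t α β γ η, DRConstEq A t α β γ η

/-- `A_j⁺(x)`: out-neighbours of `x` in the part `j` via single arcs. -/
def Aplus (A : V → V → Prop) {m : ℕ} (f : V → Fin m) (j : Fin m) (x : V) : Set V :=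
  {y | f y = j ∧ A x y ∧ ¬ A y x}

/-- `E_j(x)`: neighbours of `x` in the part `j` via edges (pairs of opposite arcs). -/
def Epart (A : V → V → Prop) {m : ℕ} (f : V → Fin m) (j : Fin m) (x : V) : Set V :=
  {y | f y = j ∧ A x y ∧ A y x}

/-- Type I: `β₁+β₂-α₁-α₂ = r` and the digraph is an `r`-coclique extension of a
semicomplete digraph. -/
def TypeI (A : V → V → Prop) (r : ℕ) (α β : ℕ → ℤ) : Prop :=
  β 1 + β 2 - α 1 - α 2 = (r : ℤ) ∧
  ∃ (N : ℕ) (S : Fin N → Fin N → Prop),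
    1 ≤ N ∧ IsSemicomplete S ∧ Iso A (cocliqueExt S r)

/-- Type II: `β₁+β₂-α₁-α₂ = 0` and `c_{ij} = c_{ji} = (r - e_{ij})/2` for all pairs `i ≠ j`. -/
def TypeII (A : V → V → Prop) {m : ℕ} (f : V → Fin m) (r : ℕ) (α β : ℕ → ℤ) : Prop :=
  β 1 + β 2 - α 1 - α 2 = 0 ∧
  ∀ i j : Fin m, i ≠ j → ∃ c e : ℕ,
    (∀ x, f x = i → (Aplus A f j x).ncard = c ∧ (Epart A f j x).ncard = e) ∧
    (∀ y, f y = j → (Aplus A f i y).ncard = c) ∧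
    c + c + e = r

/-- Condition (ii) of Type III for the ordered pair `(i,j)`: `V_i` splits as
`V_i' ∪ V_i''` with `(V_i' × V_j) ∪ (V_j × V_i'') ⊆ A⃗Γ`. -/
def TypeIIIsplitB (A : V → V → Prop) {m : ℕ} (f : V → Fin m) (i j : Fin m) : Prop :=
  ∃ S : Set V, S ⊆ {x | f x = i} ∧ S.Nonempty ∧ ({x | f x = i} \ S).Nonempty ∧
    (∀ x ∈ S, ∀ y : V, f y = j → A x y ∧ ¬ A y x) ∧
    (∀ y : V, f y = j → ∀ x ∈ {x | f x = i} \ S, A y x ∧ ¬ A x y)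

/-- Condition (iii) of Type III for the pair `(i,j)`. -/
def TypeIIIsplitC (A : V → V → Prop) {m : ℕ} (f : V → Fin m) (i j : Fin m) : Prop :=
  ∃ S T' : Set V,
    S ⊆ {x | f x = i} ∧ S.Nonempty ∧ ({x | f x = i} \ S).Nonempty ∧
    T' ⊆ {y | f y = j} ∧ T'.Nonempty ∧ ({y | f y = j} \ T').Nonempty ∧
    (∀ x ∈ S, ∀ y ∈ T', A x y ∧ A y x) ∧
    (∀ x ∈ {x | f x = i} \ S, ∀ y ∈ {y | f y = j} \ T', A x y ∧ A y x) ∧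
    (∀ x ∈ S, ∀ y ∈ {y | f y = j} \ T', A x y ∧ ¬ A y x) ∧
    (∀ y ∈ T', ∀ x ∈ {x | f x = i} \ S, A y x ∧ ¬ A x y)

/-- Type III. -/
def TypeIII (A : V → V → Prop) {m : ℕ} (f : V → Fin m) (r : ℕ) (α β : ℕ → ℤ) : Prop :=
  2 * (β 1 + β 2 - α 1 - α 2) = (r : ℤ) ∧
  ∀ i j : Fin m, i ≠ j →
    (∀ x y : V, f x = i → f y = j → A x y ∧ A y x) ∨
    (TypeIIIsplitB A f i j ∨ TypeIIIsplitB A f j i) ∨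
    TypeIIIsplitC A f i j

/-- An `(m,r)`-team tournament: an `(m,r)`-team semicomplete multipartite digraph with
no pair of opposite arcs. -/
def IsTeamTournament (A : V → V → Prop) {m : ℕ} (f : V → Fin m) (r : ℕ) : Prop :=
  IsTeamSMD A f r ∧ ∀ x y : V, ¬ (A x y ∧ A y x)

open Classical in
/-- A doubly regular `(m,r)`-team tournament with parameters `(α,β,γ)`:
`A² = αA + βAᵀ + γ(J - I - A - Aᵀ)`. -/
def IsDRTeamTournament [Fintype V] (A : V → V → Prop) {m : ℕ} (f : V → Fin m) (r : ℕ)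
    (α β γ : ℤ) : Prop :=
  IsTeamTournament A f r ∧ (∃ k, IsRegularOfValency A k) ∧
  matAdj A * matAdj A =
    α • matAdj A + β • (matAdj A)ᵀ + γ • (matJ V - 1 - matAdj A - (matAdj A)ᵀ)

/-- Type II of a doubly regular team tournament: `β - α = 0`, `r` even, and
`|N⁺(x) ∩ V_i| = r/2` for every partite set `V_i` and vertex `x ∉ V_i`. -/
def TournamentTypeII (A : V → V → Prop) {m : ℕ} (f : V → Fin m) (r : ℕ) (α β : ℤ) : Prop :=
  β = α ∧ Even r ∧ ∀ (i : Fin m) (x : V), f x ≠ i → 2 * {y | f y = i ∧ A x y}.ncard = r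

/-- The Cayley digraph `Cay(ℤ₆, {1,2})`. -/
def Cay6 : ZMod 6 → ZMod 6 → Prop := fun x y => y - x = 1 ∨ y - x = 2

/-- The directed cycle `C₄`. -/
def C4 : ZMod 4 → ZMod 4 → Prop := fun x y => y = x + 1

section AuxStatement10

variable {V : Type*}

private lemma hasPath_zero (A : V → V → Prop) (x : V) : HasPathOfLength A x x 0 :=
  ⟨fun _ => x, rfl, rfl, fun i hi => absurd hi (by omega)⟩

private lemma hasPath_one (A : V → V → Prop) {x y : V} (h : A x y) :
    HasPathOfLength A x y 1 := by
  refine ⟨fun i => if i = 0 then x else y, by simp, by simp, ?_⟩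
  intro i hi
  have : i = 0 := by omega
  subst this
  simpa using h

private lemma ddist_le (A : V → V → Prop) {x y : V} {n : ℕ}
    (h : HasPathOfLength A x y n) : ddist A x y ≤ n :=
  Nat.sInf_le h

private lemma ddist_self (A : V → V → Prop) (x : V) : ddist A x x = 0 :=
  Nat.le_zero.mp (ddist_le A (hasPath_zero A x))

private lemma ddist_spec (A : V → V → Prop) (hsc : IsStronglyConnected A) (x y : V) :
    HasPathOfLength A x y (ddist A x y) :=
  Nat.sInf_mem (hsc x y)

private lemma eq_of_ddist_eq_zero (A : V → V → Prop) (hsc : IsStronglyConnected A)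
    {x y : V} (h : ddist A x y = 0) : x = y := by
  have hp := ddist_spec A hsc x y
  rw [h] at hp
  obtain ⟨p, h0, h1, -⟩ := hp
  rw [← h0, h1]

private lemma arc_of_ddist_eq_one (A : V → V → Prop) (hsc : IsStronglyConnected A)
    {x y : V} (h : ddist A x y = 1) : A x y := by
  have hp := ddist_spec A hsc x y
  rw [h] at hp
  obtain ⟨p, h0, h1, ha⟩ := hp
  have h01 : A (p 0) (p 1) := ha 0 (by omega)
  rwa [h0, h1] at h01

private lemma ddist_le_one_add (A : V → V → Prop) (hsc : IsStronglyConnected A)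
    {x y : V} (hxy : A x y) (z : V) : ddist A x z ≤ 1 + ddist A y z := by
  obtain ⟨p, hp0, hpn, hpa⟩ := ddist_spec A hsc y z
  have hpath : HasPathOfLength A x z (ddist A y z + 1) := by
    refine ⟨fun i => if i = 0 then x else p (i - 1), by simp, by simp [hpn], ?_⟩
    intro i hi
    by_cases h0 : i = 0
    · subst h0
      simpa [hp0] using hxy
    · have h1 : i - 1 + 1 = i := by omega
      have := hpa (i - 1) (by omega)
      rw [h1] at this
      simpa [h0, Nat.add_sub_cancel] using this
  have := ddist_le A hpath
  omega

private lemma arc_iff_ddist_eq_one (A : V → V → Prop) (hsc : IsStronglyConnected A)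
    (hnl : ∀ x : V, ¬ A x x) (x y : V) : A x y ↔ ddist A x y = 1 := by
  constructor
  · intro hxy
    have h1 : ddist A x y ≤ 1 := ddist_le A (hasPath_one A hxy)
    have h0 : ddist A x y ≠ 0 := by
      intro h0
      have hx : x = y := eq_of_ddist_eq_zero A hsc h0
      exact hnl x (by rwa [← hx] at hxy)
    omega
  · exact arc_of_ddist_eq_one A hsc

private lemma outdeg_const [Fintype V] (A : V → V → Prop)
    (hsc : IsStronglyConnected A) (hnl : ∀ x : V, ¬ A x x)
    (hreg : ∀ i j : ℕ × ℕ, ∀ x y x' y' : V,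
      tdist A x y = tdist A x' y' → pnum A i j x y = pnum A i j x' y')
    (u v : V) : {w | A u w}.ncard = {w | A v w}.ncard := by
  classical
  have hfib : ∀ (a : V) (s : ℕ),
      {z | tdist A a z = (1, s) ∧ tdist A z a = (s, 1)}
        = {w | A a w ∧ ddist A w a = s} := by
    intro a s
    ext w
    simp only [Set.mem_setOf_eq, tdist, Prod.mk.injEq]
    rw [arc_iff_ddist_eq_one A hsc hnl a w]
    tauto
  set T : Finset ℕ :=
    (Finset.univ.image (fun w => ddist A w u)) ∪ (Finset.univ.image (fun w => ddist A w v))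
    with hT
  have hcount : ∀ a : V, (∀ w : V, ddist A w a ∈ T) →
      {w | A a w}.ncard = ∑ s ∈ T, pnum A (1, s) (s, 1) a a := by
    intro a hTa
    have h1 : {w | A a w}.ncard = (Finset.univ.filter (fun w => A a w)).card := by
      rw [← Set.ncard_coe_finset]
      congr 1
      ext w
      simp
    rw [h1, Finset.card_eq_sum_card_fiberwise
      (f := fun w => ddist A w a) (t := T) (fun w _ => hTa w)]
    refine Finset.sum_congr rfl ?_
    intro s _
    rw [pnum, hfib a s, ← Set.ncard_coe_finset]
    congr 1
    ext w
    simp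
  have hTu : ∀ w : V, ddist A w u ∈ T :=
    fun w => Finset.mem_union_left _ (Finset.mem_image_of_mem _ (Finset.mem_univ w))
  have hTv : ∀ w : V, ddist A w v ∈ T :=
    fun w => Finset.mem_union_right _ (Finset.mem_image_of_mem _ (Finset.mem_univ w))
  rw [hcount u hTu, hcount v hTv]
  refine Finset.sum_congr rfl ?_
  intro s _
  exact hreg (1, s) (s, 1) u u v v (by simp [tdist, ddist_self])

private lemma indeg_const [Fintype V] (A : V → V → Prop)
    (hsc : IsStronglyConnected A) (hnl : ∀ x : V, ¬ A x x)
    (hreg : ∀ i j : ℕ × ℕ, ∀ x y x' y' : V,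
      tdist A x y = tdist A x' y' → pnum A i j x y = pnum A i j x' y')
    (u v : V) : {w | A w u}.ncard = {w | A w v}.ncard := by
  classical
  have hfib : ∀ (a : V) (s : ℕ),
      {z | tdist A a z = (s, 1) ∧ tdist A z a = (1, s)}
        = {w | A w a ∧ ddist A a w = s} := by
    intro a s
    ext w
    simp only [Set.mem_setOf_eq, tdist, Prod.mk.injEq]
    rw [arc_iff_ddist_eq_one A hsc hnl w a]
    tauto
  set T : Finset ℕ :=
    (Finset.univ.image (fun w => ddist A u w)) ∪ (Finset.univ.image (fun w => ddist A v w))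
    with hT
  have hcount : ∀ a : V, (∀ w : V, ddist A a w ∈ T) →
      {w | A w a}.ncard = ∑ s ∈ T, pnum A (s, 1) (1, s) a a := by
    intro a hTa
    have h1 : {w | A w a}.ncard = (Finset.univ.filter (fun w => A w a)).card := by
      rw [← Set.ncard_coe_finset]
      congr 1
      ext w
      simp
    rw [h1, Finset.card_eq_sum_card_fiberwise
      (f := fun w => ddist A a w) (t := T) (fun w _ => hTa w)]
    refine Finset.sum_congr rfl ?_
    intro s _
    rw [pnum, hfib a s, ← Set.ncard_coe_finset]
    congr 1
    ext w
    simp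
  have hTu : ∀ w : V, ddist A u w ∈ T :=
    fun w => Finset.mem_union_left _ (Finset.mem_image_of_mem _ (Finset.mem_univ w))
  have hTv : ∀ w : V, ddist A v w ∈ T :=
    fun w => Finset.mem_union_right _ (Finset.mem_image_of_mem _ (Finset.mem_univ w))
  rw [hcount u hTu, hcount v hTv]
  refine Finset.sum_congr rfl ?_
  intro s _
  exact hreg (s, 1) (1, s) u u v v (by simp [tdist, ddist_self])

end AuxStatement10


/-- every arc `(x,y)` satisfies `∂(y,x) ≤ 3`; equivalently every `q ∈ T`
satisfies `q ≤ 4`. -/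
theorem statement_10 {V : Type*} [Fintype V] [Nonempty V] (A : V → V → Prop)
    (hsm : IsSemicompleteMultipartite A) (h : IsCWDRD A) :
    ∀ x y : V, A x y → ddist A y x ≤ 3 := by
  classical
  obtain ⟨m, -, f, hnl, -, hadj⟩ := hsm
  obtain ⟨⟨hsc, -, hreg⟩, -⟩ := h
  intro x y hxy
  by_contra hlt
  push_neg at hlt
  have h4 : 4 ≤ ddist A y x := hlt
  -- Step 1: every out-neighbour of y is an out-neighbour of x
  have key : ∀ z : V, A y z → A x z := by
    intro z hyz
    have hzx_no : ¬ A z x := by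
      intro hzx
      have := ddist_le A (hasPath_one A hzx)
      have h2 := ddist_le_one_add A hsc hyz x
      omega
    have hzx3 : 3 ≤ ddist A z x := by
      have h2 := ddist_le_one_add A hsc hyz x
      omega
    have hznex : z ≠ x := by
      intro hh
      have h0 := ddist_self A x
      rw [hh] at hzx3
      omega
    have hxz2 : ddist A x z ≤ 2 := by
      have h1 : ddist A y z ≤ 1 := ddist_le A (hasPath_one A hyz)
      have h2 := ddist_le_one_add A hsc hxy z
      omega
    by_cases hxz : A x z
    · exact hxz
    exfalso
    -- x and z are non-adjacent, hence in the same partite set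
    have hpart : f x = f z := by
      by_contra hne
      rcases (hadj x z (Ne.symm hznex)).2 hne with h1 | h2
      · exact hxz h1
      · exact hzx_no h2
    -- ddist x z = 2, get a middle vertex a
    have hxz_eq : ddist A x z = 2 := by
      have h0 : ddist A x z ≠ 0 := by
        intro h0
        exact hznex (eq_of_ddist_eq_zero A hsc h0).symm
      have h1 : ddist A x z ≠ 1 := by
        intro h1
        exact hxz (arc_of_ddist_eq_one A hsc h1)
      omega
    have hp := ddist_spec A hsc x z
    rw [hxz_eq] at hp
    obtain ⟨p, hp0, hp2, hpa⟩ := hp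
    have hxa : A x (p 1) := by
      have h01 : A (p 0) (p 1) := hpa 0 (by omega)
      rwa [hp0] at h01
    have haz : A (p 1) z := by
      have h12 : A (p 1) (p 2) := hpa 1 (by omega)
      rwa [hp2] at h12
    -- N⁺(z) ⊆ N⁺(x)
    have hNp : ∀ w : V, A z w → A x w := by
      intro w hzw
      have hwz : z ≠ w := by
        intro hh
        exact hnl z (by rwa [← hh] at hzw)
      have hfzw : f z ≠ f w := (hadj z w hwz).1 (Or.inl hzw)
      have hwx : w ≠ x := by
        intro hh
        subst hh
        exact hzx_no hzw
      have hfxw : f x ≠ f w := by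
        rw [hpart]
        exact hfzw
      rcases (hadj x w (Ne.symm hwx)).2 hfxw with h1 | h2
      · exact h1
      · exfalso
        have d1 : ddist A z x ≤ 1 + ddist A w x := ddist_le_one_add A hsc hzw x
        have d2 : ddist A w x ≤ 1 := ddist_le A (hasPath_one A h2)
        omega
    -- N⁻(x) ⊆ N⁻(z)
    have hNm : ∀ w : V, A w x → A w z := by
      intro w hwx
      have hwnx : w ≠ x := by
        intro hh
        exact hnl x (by rwa [hh] at hwx)
      have hwnz : w ≠ z := by
        intro hh
        subst hh
        exact hzx_no hwx
      have hfwx : f w ≠ f x := (hadj w x hwnx).1 (Or.inl hwx)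
      have hfwz : f w ≠ f z := by
        rw [← hpart]
        exact hfwx
      rcases (hadj w z hwnz).2 hfwz with h1 | h2
      · exact h1
      · exfalso
        have d1 : ddist A z x ≤ 1 + ddist A w x := ddist_le_one_add A hsc h2 x
        have d2 : ddist A w x ≤ 1 := ddist_le A (hasPath_one A hwx)
        omega
    -- upgrade to set equalities using degree constancy
    have heq1 : {w | A z w} = {w | A x w} :=
      Set.eq_of_subset_of_ncard_le (fun w hw => hNp w hw)
        (le_of_eq (outdeg_const A hsc hnl hreg x z)) (Set.toFinite _)
    have heq2 : {w | A w x} = {w | A w z} :=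
      Set.eq_of_subset_of_ncard_le (fun w hw => hNm w hw)
        (le_of_eq (indeg_const A hsc hnl hreg z x)) (Set.toFinite _)
    have hza : A z (p 1) := by
      have hmem : p 1 ∈ {w | A x w} := hxa
      rw [← heq1] at hmem
      exact hmem
    have hax : A (p 1) x := by
      have hmem : p 1 ∈ {w | A w z} := haz
      rw [← heq2] at hmem
      exact hmem
    have d1 : ddist A z x ≤ 1 + ddist A (p 1) x := ddist_le_one_add A hsc hza x
    have d2 : ddist A (p 1) x ≤ 1 := ddist_le A (hasPath_one A hax)
    omega
  -- Step 2: contradiction with constant out-degree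
  have heq : {w | A y w} = {w | A x w} :=
    Set.eq_of_subset_of_ncard_le (fun z hz => key z hz)
      (le_of_eq (outdeg_const A hsc hnl hreg x y)) (Set.toFinite _)
  have hyy : A y y := by
    have hmem : y ∈ {w | A x w} := hxy
    rw [← heq] at hmem
    exact hmem
  exact hnl y hyy


end Paper
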